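/- arXiv:1611.07451 — 3 statements merged into one kernel-verified Lean document; each statement's English description precedes it below -/
import Mathlib

section
/- If X is a non-singular square matrix, A is a symmetric matrix, and P is the orthogonal projection onto the complement of the null space of X A X^T, then the Moore–Penrose pseudoinverse satisfies (X A X^T)^+ = P X^{-T} A^+ X^{-1} P. -/
/-! Since `M = X A Xᵀ` is symmetric, its Moore–Penrose inverse `M⁺` commutes with `M`, and `P` is the
orthogonal projector `M M⁺ = M⁺ M`. The matrix `G = X⁻ᵀ A⁺ X⁻¹` is a generalized inverse of `M`
(`M G M = M`), and for any generalized inverse `M⁺ = M⁺ M M⁺ = M⁺ (M G M) M⁺ = P G P`. -/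

open Matrix

/-- `B` is the Moore–Penrose pseudoinverse of `A`. -/
def IsMoorePenrose {n : Type*} [Fintype n] [DecidableEq n] (A B : Matrix n n ℝ) : Prop :=
  A * B * A = A ∧ B * A * B = B ∧ (A * B)ᵀ = A * B ∧ (B * A)ᵀ = B * A

namespace Matrix

variable {m k R : Type*} [Fintype m] [Fintype k] [CommRing R]

def IsGeneralizedInverse (A : Matrix m k R) (G : Matrix k m R) : Prop :=
  A * G * A = A

theorem mul_eq_right_of_range_le {P : Matrix m m R} {Q : Matrix m k R} (hP : IsIdempotentElem P)
    (h : LinearMap.range Q.mulVecLin ≤ LinearMap.range P.mulVecLin) : P * Q = Q := by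
  refine ext_iff_mulVec.2 fun v => ?_
  obtain ⟨w, hw⟩ := h ⟨v, rfl⟩
  rw [mulVecLin_apply, mulVecLin_apply] at hw
  rw [← mulVec_mulVec, ← hw, mulVec_mulVec, hP.eq]

theorem IsSymm.eq_of_range_eq {P Q : Matrix m m R} (hPs : P.IsSymm) (hQs : Q.IsSymm)
    (hP : IsIdempotentElem P) (hQ : IsIdempotentElem Q)
    (h : LinearMap.range P.mulVecLin = LinearMap.range Q.mulVecLin) : P = Q :=
  calc P = Q * P := (mul_eq_right_of_range_le hQ h.le).symm
    _ = (P * Q)ᵀ := by rw [transpose_mul, hPs.eq, hQs.eq]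
    _ = Q := by rw [mul_eq_right_of_range_le hP h.ge, hQs.eq]

theorem IsGeneralizedInverse.mul_mul_transpose [DecidableEq m] {A G : Matrix m m R}
    (hG : A.IsGeneralizedInverse G) {X : Matrix m m R} (hX : IsUnit X.det) :
    (X * A * Xᵀ).IsGeneralizedInverse ((X⁻¹)ᵀ * G * X⁻¹) := by
  have hXX : Xᵀ * (X⁻¹)ᵀ = 1 := by rw [← transpose_mul, nonsing_inv_mul X hX, transpose_one]
  calc X * A * Xᵀ * ((X⁻¹)ᵀ * G * X⁻¹) * (X * A * Xᵀ)
      = X * A * (Xᵀ * (X⁻¹)ᵀ) * G * (X⁻¹ * X) * A * Xᵀ := by simp only [Matrix.mul_assoc]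
    _ = X * (A * G * A) * Xᵀ := by
        rw [hXX, nonsing_inv_mul X hX]; simp only [Matrix.mul_one, Matrix.mul_assoc]
    _ = X * A * Xᵀ := by rw [hG]

end Matrix

namespace IsMoorePenrose

variable {n : Type*} [Fintype n] [DecidableEq n] {A B C : Matrix n n ℝ}

theorem transpose (hB : IsMoorePenrose A B) : IsMoorePenrose Aᵀ Bᵀ := by
  obtain ⟨h₁, h₂, h₃, h₄⟩ := hB
  refine ⟨?_, ?_, ?_, ?_⟩
  · rw [← transpose_mul, ← transpose_mul, ← Matrix.mul_assoc, h₁]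
  · rw [← transpose_mul, ← transpose_mul, ← Matrix.mul_assoc, h₂]
  · rw [← transpose_mul, h₄, h₄]
  · rw [← transpose_mul, h₃, h₃]

theorem unique (hB : IsMoorePenrose A B) (hC : IsMoorePenrose A C) : B = C := by
  obtain ⟨hB₁, hB₂, hB₃, hB₄⟩ := hB
  obtain ⟨hC₁, hC₂, hC₃, hC₄⟩ := hC
  have hAB : A * B = A * C :=
    calc A * B = (A * C * A * B)ᵀ := by rw [hC₁, hB₃]
      _ = ((A * C) * (A * B))ᵀ := by simp only [Matrix.mul_assoc]
      _ = (A * B) * (A * C) := by rw [transpose_mul, hB₃, hC₃]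
      _ = A * C := by rw [← Matrix.mul_assoc, hB₁]
  have hBA : B * A = C * A :=
    calc B * A = (B * (A * C * A))ᵀ := by rw [hC₁, hB₄]
      _ = ((B * A) * (C * A))ᵀ := by simp only [Matrix.mul_assoc]
      _ = (C * A) * (B * A) := by rw [transpose_mul, hB₄, hC₄]
      _ = C * A := by rw [Matrix.mul_assoc, ← Matrix.mul_assoc A, hB₁]
  calc B = B * A * B := hB₂.symm
    _ = C * A * C := by rw [Matrix.mul_assoc, hAB, ← Matrix.mul_assoc, hBA]
    _ = C := hC₂

theorem mul_comm_of_isSymm (hB : IsMoorePenrose A B) (hA : A.IsSymm) : B * A = A * B := by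
  have hBs : Bᵀ = B := (hA.eq ▸ hB.transpose).unique hB
  rw [← hB.2.2.2, transpose_mul, hA.eq, hBs]

theorem isIdempotentElem_mul (hB : IsMoorePenrose A B) : IsIdempotentElem (A * B) := by
  rw [IsIdempotentElem, ← Matrix.mul_assoc, hB.1]

theorem range_mul (hB : IsMoorePenrose A B) :
    LinearMap.range (A * B).mulVecLin = LinearMap.range A.mulVecLin := by
  refine le_antisymm ?_ ?_
  · rw [mulVecLin_mul]
    exact LinearMap.range_comp_le_range _ _
  · conv_lhs => rw [← hB.1, mulVecLin_mul]
    exact LinearMap.range_comp_le_range _ _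

theorem mul_mul_generalizedInverse_mul_mul (hB : IsMoorePenrose A B) {G : Matrix n n ℝ}
    (hG : A.IsGeneralizedInverse G) : B * A * G * A * B = B := by
  calc B * A * G * A * B = B * (A * G * A) * B := by simp only [Matrix.mul_assoc]
    _ = B := by rw [hG, hB.2.1]

end IsMoorePenrose

theorem stmt1 {n : Type*} [Fintype n] [DecidableEq n]
    (X A : Matrix n n ℝ) (hX : IsUnit X.det) (hA : Aᵀ = A)
    (P : Matrix n n ℝ) (hPsymm : Pᵀ = P) (hPidem : P * P = P)
    (hPrange : LinearMap.range P.mulVecLin = LinearMap.range (X * A * Xᵀ).mulVecLin)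
    (Ap : Matrix n n ℝ) (hAp : IsMoorePenrose A Ap)
    (Mp : Matrix n n ℝ) (hMp : IsMoorePenrose (X * A * Xᵀ) Mp) :
    Mp = P * (X⁻¹)ᵀ * Ap * X⁻¹ * P := by
  set M := X * A * Xᵀ
  set G := (X⁻¹)ᵀ * Ap * X⁻¹
  have hMs : M.IsSymm := by
    simp only [M, IsSymm, transpose_mul, transpose_transpose, hA, Matrix.mul_assoc]
  have hP : P = M * Mp :=
    IsSymm.eq_of_range_eq hPsymm hMp.2.2.1 hPidem hMp.isIdempotentElem_mul
      (hPrange.trans hMp.range_mul.symm)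
  have hP' : P = Mp * M := hP.trans (hMp.mul_comm_of_isSymm hMs).symm
  have hG : M.IsGeneralizedInverse G := IsGeneralizedInverse.mul_mul_transpose hAp.1 hX
  calc Mp = Mp * M * G * M * Mp := (hMp.mul_mul_generalizedInverse_mul_mul hG).symm
    _ = (Mp * M) * G * (M * Mp) := by simp only [Matrix.mul_assoc]
    _ = P * (X⁻¹)ᵀ * Ap * X⁻¹ * P := by rw [← hP, ← hP']; simp only [G, Matrix.mul_assoc]
end

section
/- Let L be the Laplacian of a graph, v a vertex with degree d = L(v,v) > 0. Then the matrix C_v(L) = Star_v(L) - (1/L(v,v)) L(:,v) L(:,v)^T is a graph Laplacian, equal to the weighted Laplacian of the clique on the neighbors of v with edge weights w(v,i)w(v,j)/d. -/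
/-! A matrix with zero row sums is determined by its off-diagonal entries. Both sides have
zero row sums: the star of `v` is a Laplacian, and the rank-one correction is built from the
column `L(:,v)`, which sums to zero. So it suffices to compare off-diagonal entries, where the
correction contributes `-w v i * w v j / d` away from `v` and cancels the star's edges at `v`. -/

open Matrix

/-- The weighted Laplacian of the weight function `w`. -/
def lapW {V : Type*} [Fintype V] [DecidableEq V] (w : V → V → ℝ) : Matrix V V ℝ :=
  Matrix.of fun i j => if i = j then ∑ k, w i k else - w i j

section Laplacian

variable {V : Type*} [Fintype V] [DecidableEq V]

theorem lapW_apply_self (w : V → V → ℝ) (i : V) : lapW w i i = ∑ k, w i k := by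
  simp [lapW]

theorem lapW_apply_of_ne (w : V → V → ℝ) {i j : V} (h : i ≠ j) : lapW w i j = -w i j := by
  simp [lapW, h]

theorem lapW_comm {w : V → V → ℝ} (hsymm : ∀ i j, w i j = w j i) (i j : V) :
    lapW w i j = lapW w j i := by
  by_cases h : i = j
  · rw [h]
  · rw [lapW_apply_of_ne w h, lapW_apply_of_ne w (Ne.symm h), hsymm]

theorem sum_lapW_row (w : V → V → ℝ) (i : V) : ∑ j, lapW w i j = w i i := by
  rw [← Finset.add_sum_erase _ _ (Finset.mem_univ i), lapW_apply_self,
    ← Finset.add_sum_erase _ _ (Finset.mem_univ i),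
    Finset.sum_congr rfl fun j hj => lapW_apply_of_ne w (Finset.ne_of_mem_erase hj).symm,
    Finset.sum_neg_distrib]
  ring

theorem eq_lapW_of_offDiag {w : V → V → ℝ} {M : Matrix V V ℝ} (hw : ∀ i, w i i = 0)
    (hrow : ∀ i, ∑ j, M i j = 0) (hoff : ∀ i j, i ≠ j → M i j = -w i j) : M = lapW w := by
  rw [← sub_eq_zero]
  have hoff' : ∀ i j, i ≠ j → (M - lapW w) i j = 0 := fun i j h => by
    rw [Matrix.sub_apply, hoff i j h, lapW_apply_of_ne w h, sub_self]
  ext i j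
  by_cases h : i = j
  · subst h
    have hsum : ∑ j, (M - lapW w) i j = 0 := by
      simp only [Matrix.sub_apply, Finset.sum_sub_distrib, hrow, sum_lapW_row, hw, sub_self]
    rwa [Finset.sum_eq_single i (fun j _ hj => hoff' i j hj.symm) (by simp)] at hsum
  · exact hoff' i j h

end Laplacian

theorem stmt2_general {V : Type*} [Fintype V] [DecidableEq V] (w : V → V → ℝ)
    (hsymm : ∀ i j, w i j = w j i) (hdiag : ∀ i, w i i = 0)
    (v : V) (hd : 0 < lapW w v v) :
    lapW (fun i j => if i = v ∨ j = v then w i j else 0) -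
        (1 / lapW w v v) • Matrix.of (fun i j => lapW w i v * lapW w j v) =
      lapW (fun i j => if i = v ∨ j = v ∨ i = j then 0 else w v i * w v j / lapW w v v) := by
  have hcol : ∑ j, lapW w j v = 0 := by
    rw [Finset.sum_congr rfl fun j _ => lapW_comm hsymm j v, sum_lapW_row, hdiag]
  have hd0 : lapW w v v ≠ 0 := hd.ne'
  apply eq_lapW_of_offDiag (fun i => by simp)
  · intro i
    simp only [Matrix.sub_apply, Matrix.smul_apply, Matrix.of_apply, smul_eq_mul,
      Finset.sum_sub_distrib, ← Finset.mul_sum, hcol, sum_lapW_row, hdiag, ite_self]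
    ring
  · intro i j hij
    rw [Matrix.sub_apply, Matrix.smul_apply, Matrix.of_apply, smul_eq_mul, lapW_apply_of_ne _ hij]
    rcases eq_or_ne i v with rfl | hi
    · rw [lapW_apply_of_ne w hij.symm, hsymm j i]
      field_simp
      simp
    rcases eq_or_ne j v with rfl | hj
    · rw [lapW_apply_of_ne w hij, hsymm i j]
      field_simp
      simp
    rw [lapW_apply_of_ne w hi, lapW_apply_of_ne w hj, hsymm v i, hsymm v j]
    simp only [hi, hj, hij, or_self, if_false]
    ring

theorem stmt2 {V : Type*} [Fintype V] [DecidableEq V] (w : V → V → ℝ)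
    (hsymm : ∀ i j, w i j = w j i) (hnn : ∀ i j, 0 ≤ w i j) (hdiag : ∀ i, w i i = 0)
    (v : V) (hd : 0 < lapW w v v) :
    lapW (fun i j => if i = v ∨ j = v then w i j else 0) -
        (1 / lapW w v v) • Matrix.of (fun i j => lapW w i v * lapW w j v) =
      lapW (fun i j => if i = v ∨ j = v ∨ i = j then 0 else w v i * w v j / lapW w v v) :=
  stmt2_general w hsymm hdiag v hd
end

section
/- Deletion and contraction commute with Schur complements: for a graph G with vertex partition V₁, V₂ and an edge e with both endpoints in V₁, Schur(G \ e, V₁) = Schur(G, V₁) \ e and Schur(G / e, V₁) = Schur(G, V₁) / e. -/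
open Matrix

/-- The Schur complement of `L` onto the vertices satisfying `p`, eliminating the rest. -/
noncomputable def schurOn {V : Type*} [Fintype V] [DecidableEq V] (L : Matrix V V ℝ)
    (p : V → Prop) [DecidablePred p] : Matrix {i // p i} {i // p i} ℝ :=
  L.submatrix (Subtype.val : {i // p i} → V) (Subtype.val : {i // p i} → V) -
    L.submatrix (Subtype.val : {i // p i} → V) (Subtype.val : {i // ¬ p i} → V) *
      (L.submatrix (Subtype.val : {i // ¬ p i} → V) (Subtype.val : {i // ¬ p i} → V))⁻¹ *
      L.submatrix (Subtype.val : {i // ¬ p i} → V) (Subtype.val : {i // p i} → V)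

/-- The matrix realizing contraction of the edge `(a,b)` (identifying `b` with `a`). -/
def contractMat {V : Type*} [Fintype V] [DecidableEq V] (a b : V) :
    Matrix V {x : V // x ≠ b} ℝ :=
  Matrix.of fun i j => if i = ↑j ∨ (i = b ∧ (j : V) = a) then 1 else 0

/-!
Deleting an edge inside `V₁` subtracts a matrix supported on `V₁ × V₁`, so the blocks that involve
`V₂` do not change and the perturbation passes straight through the Schur complement. Contracting
the edge is the congruence `L ↦ Cᵀ L C` by a matrix `C` that is block diagonal for the partition,
with a permutation matrix as its `V₂`-block; the permutation conjugates the inverse of the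
eliminated block, so such a congruence commutes with taking Schur complements.
-/

section SchurComplement

variable {V W : Type*} [Fintype V]

lemma schurOn_eq_toBlock [DecidableEq V] (L : Matrix V V ℝ) (p : V → Prop) [DecidablePred p] :
    schurOn L p = L.toBlock p p -
      L.toBlock p (fun i => ¬ p i) * (L.toBlock (fun i => ¬ p i) (fun i => ¬ p i))⁻¹ *
        L.toBlock (fun i => ¬ p i) p :=
  rfl

lemma schurOn_sub_of_supported [DecidableEq V] (L M : Matrix V V ℝ) (p : V → Prop) [DecidablePred p]
    (hM : ∀ i j, ¬ p i ∨ ¬ p j → M i j = 0) :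
    schurOn (L - M) p = schurOn L p - M.toBlock p p := by
  have hblock : ∀ (r s : V → Prop), (∀ i j, r i → s j → M i j = 0) →
      (L - M).toBlock r s = L.toBlock r s := fun r s h => by
    ext i j
    simp [h i j i.2 j.2]
  rw [schurOn_eq_toBlock, schurOn_eq_toBlock,
    hblock p (fun i => ¬ p i) fun i j _ hj => hM i j (.inr hj),
    hblock (fun i => ¬ p i) _ fun i j hi _ => hM i j (.inl hi),
    hblock (fun i => ¬ p i) p fun i j hi _ => hM i j (.inl hi), show (L - M).toBlock p p = L.toBlock p p - M.toBlock p p from rfl, sub_right_comm]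

lemma toMatrix_toPEquiv_mul_inv_mul_transpose {m n : Type*} [Fintype m] [DecidableEq m]
    [Fintype n] [DecidableEq n] (e : m ≃ n) (A : Matrix m m ℝ) :
    (e.toPEquiv.toMatrix : Matrix m n ℝ) *
        ((e.toPEquiv.toMatrix : Matrix m n ℝ)ᵀ * A * (e.toPEquiv.toMatrix : Matrix m n ℝ))⁻¹ *
      (e.toPEquiv.toMatrix : Matrix m n ℝ)ᵀ = A⁻¹ := by
  rw [← PEquiv.toMatrix_symm, ← Equiv.toPEquiv_symm, PEquiv.toMatrix_toPEquiv_mul,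
    PEquiv.mul_toMatrix_toPEquiv, PEquiv.toMatrix_toPEquiv_mul, PEquiv.mul_toMatrix_toPEquiv]
  simp only [submatrix_submatrix, Function.id_comp, Function.comp_id]
  rw [inv_submatrix_equiv]
  simp

lemma toBlock_transpose_mul_mul (L : Matrix V V ℝ) (C : Matrix V W ℝ) (p : V → Prop)
    [DecidablePred p] (r s : W → Prop) :
    (Cᵀ * L * C).toBlock r s =
      ((C.toBlock p r)ᵀ * L.toBlock p p + (C.toBlock (fun v => ¬ p v) r)ᵀ *
          L.toBlock (fun v => ¬ p v) p) * C.toBlock p s +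
        ((C.toBlock p r)ᵀ * L.toBlock p (fun v => ¬ p v) + (C.toBlock (fun v => ¬ p v) r)ᵀ *
          L.toBlock (fun v => ¬ p v) (fun v => ¬ p v)) * C.toBlock (fun v => ¬ p v) s := by
  rw [toBlock_mul_eq_add _ p, toBlock_mul_eq_add _ p, toBlock_mul_eq_add _ p]
  rfl

lemma schurOn_transpose_mul_mul [DecidableEq V] [Fintype W] [DecidableEq W]
    (L : Matrix V V ℝ) (C : Matrix V W ℝ) (p : V → Prop) [DecidablePred p]
    (q : W → Prop) [DecidablePred q] (e : {v // ¬ p v} ≃ {w // ¬ q w})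
    (hpq : C.toBlock p (fun w => ¬ q w) = 0) (hqp : C.toBlock (fun v => ¬ p v) q = 0)
    (he : C.toBlock (fun v => ¬ p v) (fun w => ¬ q w) = e.toPEquiv.toMatrix) :
    schurOn (Cᵀ * L * C) q = (C.toBlock p q)ᵀ * schurOn L p * C.toBlock p q := by
  rw [schurOn_eq_toBlock, schurOn_eq_toBlock, toBlock_transpose_mul_mul _ _ p,
    toBlock_transpose_mul_mul _ _ p, toBlock_transpose_mul_mul _ _ p,
    toBlock_transpose_mul_mul _ _ p, hpq, hqp, he]
  simp only [transpose_zero, Matrix.zero_mul, Matrix.mul_zero, add_zero, zero_add]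
  rw [← toMatrix_toPEquiv_mul_inv_mul_transpose e]
  simp only [Matrix.mul_sub, Matrix.sub_mul, Matrix.mul_assoc]

lemma schurOn_contractMat [DecidableEq V] (L : Matrix V V ℝ)
    (p : V → Prop) [DecidablePred p] {a b : V} (ha : p a) (hb : p b) :
    schurOn ((contractMat a b)ᵀ * L * contractMat a b) (fun x => p ↑x) =
      ((contractMat a b).toBlock p fun x => p ↑x)ᵀ * schurOn L p *
        (contractMat a b).toBlock p fun x => p ↑x := by
  have hne : ∀ {v}, ¬ p v → v ≠ b := fun hv h => hv (h ▸ hb)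
  refine schurOn_transpose_mul_mul L _ p _ (Equiv.subtypeSubtypeEquivSubtype hne).symm ?_ ?_ ?_
  · ext i j
    have hij : (i : V) ≠ j := fun h => j.2 (h ▸ i.2)
    have hja : (j : V) ≠ a := fun h => j.2 (h ▸ ha)
    simp [contractMat, hij, hja]
  · ext i j
    have hij : (i : V) ≠ j := fun h => i.2 (h ▸ j.2)
    simp [contractMat, hij, hne i.2]
  · ext i j
    simp [contractMat, PEquiv.toMatrix_apply, hne i.2, Subtype.ext_iff]

end SchurComplement

theorem stmt17_general {V : Type*} [Fintype V] [DecidableEq V]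
    (L : Matrix V V ℝ)
    (p : V → Prop) [DecidablePred p]
    (a b : V) (ha : p a) (hb : p b)
    (w₀ : ℝ)
    (bv : V → ℝ) (hbv : bv = fun i => if i = a then 1 else if i = b then -1 else 0) :
    -- deletion commutes with taking the Schur complement
    (schurOn (L - w₀ • Matrix.of fun i j => bv i * bv j) p =
        schurOn L p - w₀ • Matrix.of fun i j : {i // p i} => bv ↑i * bv ↑j) ∧
    -- contraction commutes with taking the Schur complement
    schurOn ((contractMat a b)ᵀ * L * contractMat a b) (fun x : {x : V // x ≠ b} => p ↑x) =
      (Matrix.of fun (i : {i : V // p i}) (j : {x : {x : V // x ≠ b} // p ↑x}) =>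
          if (↑i : V) = ↑↑j ∨ ((↑i : V) = b ∧ (↑↑j : V) = a) then (1 : ℝ) else 0)ᵀ *
        schurOn L p *
        (Matrix.of fun (i : {i : V // p i}) (j : {x : {x : V // x ≠ b} // p ↑x}) =>
          if (↑i : V) = ↑↑j ∨ ((↑i : V) = b ∧ (↑↑j : V) = a) then (1 : ℝ) else 0) := by
  have hbv_off : ∀ i, ¬ p i → bv i = 0 := by
    intro i hi
    have hia : i ≠ a := fun h => hi (h ▸ ha)
    have hib : i ≠ b := fun h => hi (h ▸ hb)
    simp [hbv, hia, hib]
  -- the explicit matrix in the statement is the `p`-block of `contractMat a b`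
  refine ⟨schurOn_sub_of_supported L _ p ?_, schurOn_contractMat L p ha hb⟩
  rintro i j (hi | hj)
  · simp [hbv_off i hi]
  · simp [hbv_off j hj]

theorem stmt17 {V : Type*} [Fintype V] [DecidableEq V]
    (L : Matrix V V ℝ) (hL : L.PosSemidef)
    (p : V → Prop) [DecidablePred p]
    (hFF : IsUnit (L.submatrix (Subtype.val : {i // ¬ p i} → V)
      (Subtype.val : {i // ¬ p i} → V)).det)
    (a b : V) (hab : a ≠ b) (ha : p a) (hb : p b)
    (w₀ : ℝ)
    (bv : V → ℝ) (hbv : bv = fun i => if i = a then 1 else if i = b then -1 else 0) :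
    -- deletion commutes with taking the Schur complement
    (schurOn (L - w₀ • Matrix.of fun i j => bv i * bv j) p =
        schurOn L p - w₀ • Matrix.of fun i j : {i // p i} => bv ↑i * bv ↑j) ∧
    -- contraction commutes with taking the Schur complement
    schurOn ((contractMat a b)ᵀ * L * contractMat a b) (fun x : {x : V // x ≠ b} => p ↑x) =
      (Matrix.of fun (i : {i : V // p i}) (j : {x : {x : V // x ≠ b} // p ↑x}) =>
          if (↑i : V) = ↑↑j ∨ ((↑i : V) = b ∧ (↑↑j : V) = a) then (1 : ℝ) else 0)ᵀ *
        schurOn L p *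
        (Matrix.of fun (i : {i : V // p i}) (j : {x : {x : V // x ≠ b} // p ↑x}) =>
          if (↑i : V) = ↑↑j ∨ ((↑i : V) = b ∧ (↑↑j : V) = a) then (1 : ℝ) else 0) :=
  stmt17_general L p a b ha hb w₀ bv hbv
end
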